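/- arXiv:math/0609100 — 4 statements merged into one kernel-verified Lean document; each statement's English description precedes it below -/
import Mathlib

section
/- Let G = (V, E) be an undirected graph and H ⊆ V a subset whose induced subgraph is decomposable (chordal) and connected. Then Σ_C (-1)^{|C|-1} = 1, where the sum ranges over all nonempty complete (clique) subsets C of H in G. -/
open Finset
open scoped Classical

/-- A graph is chordal (decomposable) if every cycle of length at least 4 has a
chord, i.e. an edge of the graph joining two vertices of the cycle which is not
an edge of the cycle. -/
def IsChordal {V : Type*} (G : SimpleGraph V) : Prop :=
  ∀ ⦃v : V⦄ (w : G.Walk v v), w.IsCycle → 4 ≤ w.length →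
    ∃ a b, a ∈ w.support ∧ b ∈ w.support ∧ G.Adj a b ∧ s(a, b) ∉ w.edges

/-!
Write `f(s) = ∑ (-1)^|C|` over all cliques `C ⊆ s`, the empty one included, so that the sum in
question is `1 - f(H)`. Cliques through a vertex `v ∈ s` are `v` added to cliques of its
neighbourhood `N`, whence `f(s) = f(s \ {v}) - f(N)`. Choose `v` so that `G[s \ {v}]` stays
connected. In a chordal graph `G[N]` is then connected as well: take a path between two
neighbours of `v` avoiding `v`. If it has a chord it can be shortened; otherwise it closes up
through `v` to a cycle of length at least 4 whose chord must join `v` to an inner vertex of the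
path, which cuts the path into two shorter ones between neighbours of `v`. Induction on `|s|`
gives `f = 0` for every nonempty connected chordal `G[s]`.
-/

open SimpleGraph

namespace SimpleGraph

variable {V W : Type*}

namespace Walk

variable {Γ : SimpleGraph W}

theorem exists_shorter_of_chord {x y : W} (p : Γ.Walk x y) {a b : W} (ha : a ∈ p.support)
    (hb : b ∈ p.support) (hab : Γ.Adj a b) (hp : s(a, b) ∉ p.edges) :
    ∃ q : Γ.Walk x y, q.length < p.length ∧ q.support ⊆ p.support := by
  induction p with
  | nil =>
    simp only [support_nil, List.mem_singleton] at ha hb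
    exact absurd hab (ha ▸ hb ▸ Γ.irrefl)
  | @cons x w y hxw p ih =>
    have jump : ∀ c ∈ p.support, Γ.Adj x c → s(x, c) ∉ (cons hxw p).edges →
        ∃ q : Γ.Walk x y,
          q.length < (cons hxw p).length ∧ q.support ⊆ (cons hxw p).support := by
      intro c hc hxc hxc'
      refine ⟨cons hxc (p.dropUntil c hc), ?_, ?_⟩
      · have hsplit := congrArg length (p.take_spec hc)
        have hw : w ≠ c := by rintro rfl; simp at hxc'
        have : (p.takeUntil c hc).length ≠ 0 := fun h =>
          hw ((p.takeUntil c hc).eq_of_length_eq_zero h)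
        simp only [length_append] at hsplit
        simp only [length_cons]
        omega
      · simp only [support_cons]
        exact List.cons_subset_cons _ (p.support_dropUntil_subset_support hc)
    rw [support_cons, List.mem_cons] at ha hb
    rcases ha with rfl | ha <;> rcases hb with rfl | hb
    · exact absurd hab Γ.irrefl
    · exact jump b hb hab hp
    · exact jump a ha hab.symm (by rwa [Sym2.eq_swap])
    · obtain ⟨q, hlt, hsub⟩ := ih ha hb (fun h => hp (by simp [h]))
      exact ⟨cons hxw q, by simpa using hlt, by simpa using List.cons_subset_cons _ hsub⟩

theorem IsPath.isCycle_cons_concat {v x y : W} {p : Γ.Walk x y} (hp : p.IsPath)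
    (hv : v ∉ p.support) (hxy : x ≠ y) (hx : Γ.Adj v x) (hy : Γ.Adj y v) :
    (cons hx (p.concat hy)).IsCycle := by
  refine (cons_isCycle_iff _ _).2 ⟨hp.concat hv hy, fun h => ?_⟩
  rw [edges_concat, List.concat_eq_append, List.mem_append, List.mem_singleton] at h
  rcases h with h | h
  · exact hv (p.fst_mem_support_of_mem_edges h)
  · rcases Sym2.eq_iff.1 h with ⟨rfl, -⟩ | ⟨-, rfl⟩
    · exact hv p.end_mem_support
    · exact hxy rfl

end Walk

variable {G : SimpleGraph V}

theorem Preconnected.induce_image {s : Set V} {A : Set s}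
    (h : ((G.induce s).induce A).Preconnected) : (G.induce (Subtype.val '' A)).Preconnected :=
  h.map (induceHom (Embedding.induce s).toHom (Set.mapsTo_image _ _))
    (Set.surjective_mapsTo_image_restrict _ _)

section Cliques

variable [DecidableEq V]

variable (G) in
/-- Minus the reduced Euler characteristic of the clique complex of `G[s]`. -/
noncomputable def signedCliqueCount (s : Finset V) : ℤ :=
  ∑ C ∈ s.powerset.filter (fun C : Finset V => G.IsClique (C : Set V)), (-1) ^ C.card

theorem isClique_insert_iff_subset_filter_adj {s t : Finset V} {v : V} (hv : v ∉ s)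
    (ht : t ⊆ s) :
    G.IsClique (insert v t : Finset V) ↔ G.IsClique (t : Set V) ∧ t ⊆ s.filter (G.Adj v) := by
  rw [coe_insert, isClique_insert]
  refine and_congr_right fun _ => ⟨fun h b hb => mem_filter.2 ⟨ht hb, h b hb ?_⟩,
    fun h b hb _ => (mem_filter.1 (h hb)).2⟩
  rintro rfl
  exact hv (ht hb)

theorem signedCliqueCount_insert {s : Finset V} {v : V} (hv : v ∉ s) :
    G.signedCliqueCount (insert v s) =
      G.signedCliqueCount s - G.signedCliqueCount (s.filter (G.Adj v)) := by
  simp only [signedCliqueCount, sum_filter]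
  rw [sum_powerset_insert hv, sub_eq_add_neg, ← sum_neg_distrib]
  congr 1
  rw [← sum_subset (powerset_mono.2 (filter_subset (G.Adj v) s))]
  · refine sum_congr rfl fun t ht => ?_
    have hts := (mem_powerset.1 ht).trans (filter_subset _ s)
    have hvt : v ∉ t := fun h => hv (hts h)
    rw [if_congr ((isClique_insert_iff_subset_filter_adj hv hts).trans
      (and_iff_left (mem_powerset.1 ht))) rfl rfl, card_insert_of_notMem hvt, pow_succ]
    split_ifs <;> simp
  · intro t hts htN
    rw [if_neg fun h => htN (mem_powerset.2
      ((isClique_insert_iff_subset_filter_adj hv (mem_powerset.1 hts)).1 h).2)]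

theorem sum_nonempty_cliques_eq_one_sub (s : Finset V) :
    ∑ C ∈ s.powerset.filter (fun C : Finset V => C.Nonempty ∧ G.IsClique (C : Set V)),
      (-1 : ℤ) ^ (C.card - 1) = 1 - G.signedCliqueCount s := by
  have hempty : ∅ ∈ s.powerset.filter (fun C : Finset V => G.IsClique (C : Set V)) := by simp
  have herase : (s.powerset.filter (fun C : Finset V => G.IsClique (C : Set V))).erase ∅ =
      s.powerset.filter (fun C : Finset V => C.Nonempty ∧ G.IsClique (C : Set V)) := by
    ext C
    simp only [mem_erase, mem_filter, mem_powerset, ← nonempty_iff_ne_empty]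
    tauto
  rw [signedCliqueCount, ← add_sum_erase _ _ hempty, herase, card_empty, pow_zero,
    sub_add_cancel_left, ← sum_neg_distrib]
  refine sum_congr rfl fun C hC => ?_
  obtain ⟨k, hk⟩ := Nat.exists_eq_add_one.2 (mem_filter.1 hC).2.1.card_pos
  simp [hk, pow_succ]

end Cliques

end SimpleGraph

section Chordal

variable {V W W' : Type*} {Γ : SimpleGraph W}

theorem IsChordal.of_embedding {Γ' : SimpleGraph W'} (f : Γ' ↪g Γ) (hΓ : IsChordal Γ) :
    IsChordal Γ' := by
  intro v w hw hlen
  obtain ⟨a, b, ha, hb, hab, hne⟩ :=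
    hΓ (w.map f.toHom) (hw.map f.injective) (by rwa [Walk.length_map])
  simp only [Walk.support_map, List.mem_map] at ha hb
  obtain ⟨a, ha, rfl⟩ := ha
  obtain ⟨b, hb, rfl⟩ := hb
  refine ⟨a, b, ha, hb, f.map_adj_iff.1 hab, fun h => hne ?_⟩
  rw [Walk.edges_map]
  exact List.mem_map_of_mem (f := Sym2.map f.toHom) h

open Walk in
theorem IsChordal.exists_adj_inner_of_chordless {v x y : W} (hΓ : IsChordal Γ)
    (hx : Γ.Adj v x) (hy : Γ.Adj v y) {p : Γ.Walk x y} (hp : p.IsPath) (hv : v ∉ p.support)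
    (hlen : 2 ≤ p.length)
    (hchordless : ∀ a ∈ p.support, ∀ b ∈ p.support, Γ.Adj a b → s(a, b) ∈ p.edges) :
    ∃ b ∈ p.support, b ≠ x ∧ b ≠ y ∧ Γ.Adj v b := by
  have hxy : x ≠ y := by
    rintro rfl
    rw [length_eq_zero_iff.2 (isPath_iff_nil.1 hp)] at hlen
    omega
  set c := cons hx (p.concat hy.symm)
  have hc : ∀ z ∈ c.support, z = v ∨ z ∈ p.support := by
    intro z hz
    simp only [c, support_cons, support_concat, List.mem_cons, List.mem_append] at hz
    tauto
  have inner : ∀ b ∈ p.support, Γ.Adj v b → s(v, b) ∉ c.edges →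
      ∃ b ∈ p.support, b ≠ x ∧ b ≠ y ∧ Γ.Adj v b := by
    intro b hb hvb hvb'
    refine ⟨b, hb, ?_, ?_, hvb⟩ <;> rintro rfl <;> simp [c, edges_concat] at hvb'
  obtain ⟨a, b, ha, hb, hab, hne⟩ :=
    hΓ c (hp.isCycle_cons_concat hv hxy hx hy.symm) (by simp [c]; omega)
  rcases hc a ha with rfl | hpa <;> rcases hc b hb with rfl | hpb
  · exact absurd hab Γ.irrefl
  · exact inner b hpb hab hne
  · exact inner a hpa hab.symm (by rwa [Sym2.eq_swap])
  · exact absurd (by simp [c, edges_concat, hchordless a hpa b hpb hab]) hne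

open Walk in
theorem IsChordal.exists_walk_forall_adj {v x y : W} (hΓ : IsChordal Γ) (hx : Γ.Adj v x)
    (hy : Γ.Adj v y) (p : Γ.Walk x y) (hp : p.IsPath) (hv : v ∉ p.support) :
    ∃ q : Γ.Walk x y, ∀ z ∈ q.support, Γ.Adj v z := by
  induction hn : p.length using Nat.strong_induction_on generalizing x y with
  | _ n ih =>
  by_cases hchord : ∃ a ∈ p.support, ∃ b ∈ p.support, Γ.Adj a b ∧ s(a, b) ∉ p.edges
  · obtain ⟨a, ha, b, hb, hab, hne⟩ := hchord
    obtain ⟨q, hlt, hsub⟩ := p.exists_shorter_of_chord ha hb hab hne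
    exact ih _ ((q.length_bypass_le_length).trans_lt (hn ▸ hlt)) hx hy q.bypass q.bypass_isPath
      (fun h => hv (hsub (q.support_bypass_subset_support h))) rfl
  push Not at hchord
  rcases Nat.lt_or_ge n 2 with hn2 | hn2
  · rcases p with _ | ⟨hxy, _ | ⟨_, _⟩⟩
    · exact ⟨nil, by simpa using hx⟩
    · exact ⟨cons hxy nil, by simp [hx, hy]⟩
    · simp only [length_cons] at hn
      omega
  obtain ⟨b, hb, hbx, hby, hvb⟩ :=
    hΓ.exists_adj_inner_of_chordless hx hy hp hv (hn ▸ hn2) hchord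
  have hlen := congrArg length (p.take_spec hb)
  rw [length_append, hn] at hlen
  have h₁ : (p.takeUntil b hb).length ≠ 0 := fun h =>
    hbx ((p.takeUntil b hb).eq_of_length_eq_zero h).symm
  have h₂ : (p.dropUntil b hb).length ≠ 0 := fun h =>
    hby ((p.dropUntil b hb).eq_of_length_eq_zero h)
  obtain ⟨q₁, hq₁⟩ := ih _ (by omega) hx hvb _ (hp.takeUntil hb)
    (fun h => hv (p.support_takeUntil_subset_support hb h)) rfl
  obtain ⟨q₂, hq₂⟩ := ih _ (by omega) hvb hy _ (hp.dropUntil hb)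
    (fun h => hv (p.support_dropUntil_subset_support hb h)) rfl
  exact ⟨q₁.append q₂, fun z hz => by
    rcases (mem_support_append_iff _ _).1 hz with hz | hz
    exacts [hq₁ z hz, hq₂ z hz]⟩

theorem IsChordal.preconnected_induce_neighborSet (hΓ : IsChordal Γ) {v : W}
    (hv : (Γ.induce {v}ᶜ).Preconnected) : (Γ.induce (Γ.neighborSet v)).Preconnected := by
  rintro ⟨x, hx⟩ ⟨y, hy⟩
  obtain ⟨p⟩ := hv ⟨x, hx.ne'⟩ ⟨y, hy.ne'⟩
  set p' := (p.map (Embedding.induce _).toHom).bypass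
  have hp' : v ∉ p'.support := fun h => by
    have := Walk.support_bypass_subset_support _ h
    rw [Walk.support_map, List.mem_map] at this
    obtain ⟨⟨z, hz⟩, -, hzv⟩ := this
    exact hz hzv
  obtain ⟨q, hq⟩ := hΓ.exists_walk_forall_adj hx hy p' (Walk.bypass_isPath _) hp'
  exact ⟨q.induce _ hq⟩

theorem IsChordal.signedCliqueCount_eq_zero [DecidableEq V] {G : SimpleGraph V} {s : Finset V}
    (hch : IsChordal (G.induce (s : Set V))) (hconn : (G.induce (s : Set V)).Connected) :
    G.signedCliqueCount s = 0 := by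
  induction s using Finset.strongInduction with
  | H s ih =>
  obtain ⟨⟨w, hw⟩⟩ := hconn.nonempty
  rcases subsingleton_or_nontrivial (s : Set V) with hs | hs
  · obtain rfl : s = {w} := eq_singleton_iff_unique_mem.2 ⟨hw, fun u hu =>
      congrArg Subtype.val (Subsingleton.elim (⟨u, hu⟩ : (s : Set V)) ⟨w, hw⟩)⟩
    rw [← insert_empty, signedCliqueCount_insert (notMem_empty w), filter_empty, sub_self]
  obtain ⟨⟨v, hv⟩, hdel⟩ :=
    hconn.exists_connected_induce_compl_singleton_of_finite_nontrivial
  obtain ⟨⟨u, hu⟩, hvu⟩ := hconn.preconnected.exists_adj_of_nontrivial ⟨v, hv⟩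
  set N := (s.erase v).filter (G.Adj v)
  have hE : ((s.erase v : Finset V) : Set V) = Subtype.val '' {⟨v, hv⟩}ᶜ := by
    ext x; simp [and_comm]
  have hN : (N : Set V) = Subtype.val '' (G.induce s).neighborSet ⟨v, hv⟩ := by
    ext x
    simp only [N, coe_filter, mem_erase, Set.mem_ofPred_eq, Set.mem_image, mem_neighborSet,
      induce_adj, Subtype.exists, exists_and_right, exists_eq_right, mem_coe]
    exact ⟨fun ⟨⟨_, hx⟩, h⟩ => ⟨hx, h⟩, fun ⟨hx, h⟩ => ⟨⟨h.ne', hx⟩, h⟩⟩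
  have huN : u ∈ N := mem_filter.2 ⟨mem_erase.2 ⟨(G.ne_of_adj hvu).symm, hu⟩, hvu⟩
  have hNs : N ⊂ s := (filter_subset _ _).trans_ssubset (erase_ssubset hv)
  have hNconn : (G.induce (N : Set V)).Connected :=
    have : Nonempty (N : Set V) := ⟨⟨u, huN⟩⟩
    ⟨hN ▸ Preconnected.induce_image (hch.preconnected_induce_neighborSet hdel.preconnected)⟩
  have hEconn : (G.induce ((s.erase v : Finset V) : Set V)).Connected :=
    have : Nonempty ((s.erase v : Finset V) : Set V) := ⟨⟨u, filter_subset _ _ huN⟩⟩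
    ⟨hE ▸ Preconnected.induce_image hdel.preconnected⟩
  rw [← insert_erase hv, signedCliqueCount_insert (notMem_erase v s),
    ih _ (erase_ssubset hv) (hch.of_embedding (induceHomOfLE _ (erase_subset v s))) hEconn,
    ih N hNs (hch.of_embedding (induceHomOfLE _ hNs.subset)) hNconn, sub_zero]

end Chordal

theorem alternating_sum_cliques_chordal_connected_general
    (V : Type) [DecidableEq V] (G : SimpleGraph V)
    (H : Finset V)
    (hchordal : IsChordal (G.induce (↑H : Set V)))
    (hconn : (G.induce (↑H : Set V)).Connected) :
    ∑ C ∈ H.powerset.filter (fun C : Finset V => C.Nonempty ∧ G.IsClique (↑C : Set V)),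
      (-1 : ℤ) ^ (C.card - 1) = 1 := by
  rw [sum_nonempty_cliques_eq_one_sub, hchordal.signedCliqueCount_eq_zero hconn, sub_zero]

/-- If the subgraph induced by `H` is decomposable (chordal) and connected, then
the alternating sum over nonempty complete subsets `C` of `H` of `(-1)^{|C|-1}`
equals `1`. -/
theorem alternating_sum_cliques_chordal_connected
    (V : Type) [Fintype V] [DecidableEq V] (G : SimpleGraph V)
    (H : Finset V)
    (hchordal : IsChordal (G.induce (↑H : Set V)))
    (hconn : (G.induce (↑H : Set V)).Connected) :
    ∑ C ∈ H.powerset.filter (fun C : Finset V => C.Nonempty ∧ G.IsClique (↑C : Set V)),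
      (-1 : ℤ) ^ (C.card - 1) = 1 :=
  alternating_sum_cliques_chordal_connected_general V G H hchordal hconn
end

section
/- Let G = (V, E) be an undirected graph and H ⊆ V a subset whose induced subgraph is decomposable (chordal) but not connected, with all connected components decomposable. Then Σ_C (-1)^{|C|-1} = k, where the sum ranges over all nonempty complete subsets C of H and k is the number of connected components of the induced subgraph on H; in particular this sum is not equal to 1 when k ≥ 2. -/
/-!
Fix a vertex `v` of a finite vertex set `A` and let `N` be the set of neighbours of `v` in
`A \ {v}`. Both the alternating clique sum `χ` and the number of components `c` satisfy

  `f A + f N = f (A \ {v}) + 1`.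

For `χ` this holds in every graph, since the cliques through `v` are the sets `insert v C` for
the cliques `C ⊆ N`. For `c` this is where chordality enters: adding `v` merges the components of
`A \ {v}` that meet `N` into one, and in a chordal graph these correspond exactly to the
components of `N`. Indeed, a shortest path inside `A \ {v}` between two neighbours of `v`, closed
up through `v`, is a cycle of length at least four; its chord either passes through an
intermediate neighbour of `v` or shortens the path. Strong induction on `A` gives `χ = c`.
-/

open Finset
open scoped Classical

namespace Finset

theorem card_image_eq_card_image_pair {α β γ : Type*} [DecidableEq β] [DecidableEq γ]
    {s : Finset α} {f : α → β} {g : α → γ}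
    (h : ∀ x ∈ s, ∀ y ∈ s, f x = f y → g x = g y) :
    #(s.image f) = #(s.image fun x => (f x, g x)) := by
  rw [← card_image_of_injOn (f := Prod.fst), image_image]
  · rfl
  simp only [Set.InjOn, coe_image, Set.mem_image, mem_coe]
  rintro _ ⟨x, hx, rfl⟩ _ ⟨y, hy, rfl⟩ hxy
  exact Prod.ext hxy (h x hx y hy hxy)

theorem card_image_eq_card_image_of_iff {α β γ : Type*} [DecidableEq β] [DecidableEq γ]
    {s : Finset α} {f : α → β} {g : α → γ}
    (h : ∀ x ∈ s, ∀ y ∈ s, f x = f y ↔ g x = g y) :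
    #(s.image f) = #(s.image g) := by
  rw [card_image_eq_card_image_pair fun x hx y hy => (h x hx y hy).1,
    card_image_eq_card_image_pair fun x hx y hy => (h x hx y hy).2,
    ← card_image_of_injective _ Prod.swap_injective, image_image]
  rfl

end Finset

namespace SimpleGraph

variable {V : Type*} {G : SimpleGraph V} {s : Finset V} {v x y : V}

theorem Walk.exists_support_subset_length_lt_of_adj {a b : V} (w : G.Walk x y)
    (hab : G.Adj a b) (ha : a ∈ w.support) (hb : b ∈ w.support) (hnot : s(a, b) ∉ w.edges) :
    ∃ w' : G.Walk x y, w'.support ⊆ w.support ∧ w'.length < w.length := by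
  induction w with
  | nil =>
    simp only [support_nil, List.mem_singleton] at ha hb
    exact absurd (ha.trans hb.symm) hab.ne
  | @cons x x' y hxx' p ih =>
    -- A chord leaving the first vertex jumps straight to its other end further along `p`.
    have jump : ∀ c, G.Adj x c → c ∈ p.support → s(x, c) ≠ s(x, x') →
        ∃ w' : G.Walk x y, w'.support ⊆ (cons hxx' p).support ∧
          w'.length < (cons hxx' p).length := by
      intro c hxc hc hcx'
      refine ⟨cons hxc (p.dropUntil c hc), ?_, ?_⟩
      · simpa using List.cons_subset_cons _ (p.support_dropUntil_subset_support hc)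
      · have := p.length_dropUntil_lt_length hc (by rintro rfl; exact hcx' rfl)
        simp only [length_cons]
        omega
    simp only [support_cons, List.mem_cons, edges_cons] at ha hb hnot
    rcases ha with rfl | ha
    · exact jump b hab (hb.resolve_left hab.ne.symm) fun h => hnot (Or.inl h)
    rcases hb with rfl | hb
    · exact jump a hab.symm ha fun h => hnot (Or.inl (Sym2.eq_swap.trans h))
    obtain ⟨p', hp's, hp'l⟩ := ih ha hb fun h => hnot (Or.inr h)
    exact ⟨cons hxx' p', by simpa using List.cons_subset_cons _ hp's, by simpa using hp'l⟩

-- Reachability inside `G.induce s`, phrased without passing to the subtype.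
variable (G) in
def ReachableIn (s : Finset V) (x y : V) : Prop :=
  ∃ w : G.Walk x y, ∀ z ∈ w.support, z ∈ s

namespace ReachableIn

variable {t : Finset V} {z : V}

theorem refl (hx : x ∈ s) : G.ReachableIn s x x :=
  ⟨.nil, by simpa using hx⟩

theorem of_adj (hx : x ∈ s) (hy : y ∈ s) (hxy : G.Adj x y) : G.ReachableIn s x y :=
  ⟨.cons hxy .nil, by simp [hx, hy]⟩

theorem symm (h : G.ReachableIn s x y) : G.ReachableIn s y x :=
  let ⟨w, hw⟩ := h
  ⟨w.reverse, by simpa using hw⟩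

theorem trans (h : G.ReachableIn s x y) (h' : G.ReachableIn s y z) : G.ReachableIn s x z :=
  let ⟨w, hw⟩ := h
  let ⟨w', hw'⟩ := h'
  ⟨w.append w', by simpa [Walk.mem_support_append_iff, or_imp, forall_and] using ⟨hw, hw'⟩⟩

theorem mono (hst : s ⊆ t) (h : G.ReachableIn s x y) : G.ReachableIn t x y :=
  let ⟨w, hw⟩ := h
  ⟨w, fun z hz => hst (hw z hz)⟩

theorem mem_right (h : G.ReachableIn s x y) : y ∈ s :=
  let ⟨w, hw⟩ := h
  hw y w.end_mem_support

theorem of_insert_of_not (h : G.ReachableIn (insert v s) x y)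
    (hv : ¬G.ReachableIn (insert v s) x v) : G.ReachableIn s x y := by
  obtain ⟨w, hw⟩ := h
  have hvw : v ∉ w.support := fun hvw =>
    hv ⟨w.takeUntil v hvw, fun z hz => hw z (w.support_takeUntil_subset_support hvw hz)⟩
  refine ⟨w, fun z hz => ?_⟩
  exact (mem_insert.1 (hw z hz)).resolve_left fun h => hvw (h ▸ hz)

theorem exists_adj_of_insert (hv : v ∉ s) (hx : x ∈ s)
    (h : G.ReachableIn (insert v s) x v) : ∃ y ∈ s.filter (G.Adj v), G.ReachableIn s x y := by
  obtain ⟨w, hw⟩ := h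
  induction w with
  | nil => exact absurd hx hv
  | @cons x x' v hxx' p ih =>
    by_cases hx'v : x' = v
    · subst hx'v
      exact ⟨x, mem_filter.2 ⟨hx, hxx'.symm⟩, refl hx⟩
    have hx' : x' ∈ s := (mem_insert.1 (hw x' (by simp))).resolve_left hx'v
    obtain ⟨y, hy, hx'y⟩ := ih hv hx' fun z hz => hw z (by simp [hz])
    exact ⟨y, hy, (of_adj hx hx' hxx').trans hx'y⟩

end ReachableIn

variable (G) in
noncomputable def componentIn (s : Finset V) (x : V) : Finset V :=
  s.filter (G.ReachableIn s x)

variable (G) in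
noncomputable def numComponentsIn (s : Finset V) : ℕ :=
  #(s.image (G.componentIn s))

theorem componentIn_subset : G.componentIn s x ⊆ s :=
  filter_subset _ _

theorem mem_componentIn_self (hx : x ∈ s) : x ∈ G.componentIn s x :=
  mem_filter.2 ⟨hx, .refl hx⟩

theorem componentIn_eq_componentIn_iff (hy : y ∈ s) :
    G.componentIn s x = G.componentIn s y ↔ G.ReachableIn s x y := by
  refine ⟨fun h => (mem_filter.1 (h ▸ mem_componentIn_self hy)).2, fun h => ?_⟩
  ext z
  simp only [componentIn, mem_filter]
  exact and_congr_right fun _ => ⟨h.symm.trans, h.trans⟩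

theorem componentIn_insert_of_not_reachableIn (hxv : ¬G.ReachableIn (insert v s) x v) :
    G.componentIn (insert v s) x = G.componentIn s x := by
  ext z
  simp only [componentIn, mem_filter]
  exact ⟨fun ⟨_, h⟩ => ⟨(h.of_insert_of_not hxv).mem_right, h.of_insert_of_not hxv⟩,
    fun ⟨hz, h⟩ => ⟨mem_insert_of_mem hz, h.mono (subset_insert _ _)⟩⟩

theorem numComponentsIn_insert (hv : v ∉ s) :
    G.numComponentsIn (insert v s) =
      #((s.filter fun x => ¬G.ReachableIn (insert v s) x v).image (G.componentIn s)) + 1 := by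
  have himage : (insert v s).image (G.componentIn (insert v s)) =
      insert (G.componentIn (insert v s) v)
        ((s.filter fun x => ¬G.ReachableIn (insert v s) x v).image (G.componentIn s)) := by
    ext c
    rw [mem_insert]
    simp only [mem_image, mem_filter]
    constructor
    · rintro ⟨x, hx, rfl⟩
      by_cases hxv : G.ReachableIn (insert v s) x v
      · exact .inl ((componentIn_eq_componentIn_iff (mem_insert_self v s)).2 hxv)
      have hxs : x ∈ s := (mem_insert.1 hx).resolve_left (by rintro rfl; exact hxv (.refl hx))
      exact .inr ⟨x, ⟨hxs, hxv⟩, (componentIn_insert_of_not_reachableIn hxv).symm⟩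
    · rintro (rfl | ⟨x, ⟨hxs, hxv⟩, rfl⟩)
      · exact ⟨v, mem_insert_self v s, rfl⟩
      · exact ⟨x, mem_insert_of_mem hxs, componentIn_insert_of_not_reachableIn hxv⟩
  rw [numComponentsIn, himage, card_insert_of_notMem]
  rintro hmem
  obtain ⟨x, -, hx⟩ := mem_image.1 hmem
  exact hv (componentIn_subset (hx ▸ mem_componentIn_self (mem_insert_self v s)))

theorem numComponentsIn_eq_add (hv : v ∉ s) :
    G.numComponentsIn s =
      #((s.filter fun x => ¬G.ReachableIn (insert v s) x v).image (G.componentIn s)) +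
        #((s.filter (G.Adj v)).image (G.componentIn s)) := by
  rw [numComponentsIn, ← card_union_of_disjoint]
  · congr 1
    ext c
    simp only [mem_union, mem_image, mem_filter]
    constructor
    · rintro ⟨x, hx, rfl⟩
      by_cases hxv : G.ReachableIn (insert v s) x v
      · obtain ⟨y, hy, hxy⟩ := hxv.exists_adj_of_insert hv hx
        exact .inr ⟨y, mem_filter.1 hy,
          ((componentIn_eq_componentIn_iff (mem_filter.1 hy).1).2 hxy).symm⟩
      · exact .inl ⟨x, ⟨hx, hxv⟩, rfl⟩
    · rintro (⟨x, ⟨hx, -⟩, rfl⟩ | ⟨x, ⟨hx, -⟩, rfl⟩) <;> exact ⟨x, hx, rfl⟩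
  rw [Finset.disjoint_left]
  rintro _ hc hc'
  obtain ⟨x, hx, rfl⟩ := mem_image.1 hc
  obtain ⟨y, hy, hyx⟩ := mem_image.1 hc'
  obtain ⟨hys, hvy⟩ := mem_filter.1 hy
  have hxy := (componentIn_eq_componentIn_iff hys).1 hyx.symm
  exact (mem_filter.1 hx).2 ((hxy.mono (subset_insert _ _)).trans
    (.of_adj (mem_insert_of_mem hys) (mem_insert_self v s) hvy.symm))

theorem numComponentsIn_univ [Fintype V] :
    G.numComponentsIn univ = Nat.card G.ConnectedComponent := by
  have hcomp : ∀ x, G.componentIn univ x = (G.connectedComponentMk x).supp.toFinset := by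
    intro x
    ext y
    simp only [componentIn, ReachableIn, mem_filter, mem_univ, true_and, Set.mem_toFinset,
      ConnectedComponent.mem_supp_iff, ConnectedComponent.eq]
    exact ⟨fun ⟨w, _⟩ => ⟨w.reverse⟩, fun ⟨w⟩ => ⟨w.reverse, by simp⟩⟩
  have hinj : Function.Injective fun c : G.ConnectedComponent => c.supp.toFinset :=
    fun c d h => ConnectedComponent.supp_injective (Set.toFinset_inj.1 h)
  rw [numComponentsIn, Nat.card_eq_fintype_card, ← card_univ, ← card_image_of_injective _ hinj]
  congr 1
  ext S
  simp [hcomp, ConnectedComponent.exists]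

variable (G) in
noncomputable def cliqueEulerChar (s : Finset V) : ℤ :=
  ∑ C ∈ s.powerset.filter (fun C : Finset V => C.Nonempty ∧ G.IsClique (C : Set V)),
    (-1 : ℤ) ^ (#C - 1)

variable (G) in
noncomputable def signedCliqueSum (s : Finset V) : ℤ :=
  ∑ C ∈ s.powerset.filter (fun C : Finset V => G.IsClique (C : Set V)), (-1 : ℤ) ^ #C

theorem cliqueEulerChar_eq_one_sub_signedCliqueSum (s : Finset V) :
    G.cliqueEulerChar s = 1 - G.signedCliqueSum s := by
  have hempty : (s.powerset.filter fun C : Finset V => G.IsClique (C : Set V)).filter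
      (fun C => ¬C.Nonempty) = {∅} := by
    ext C
    simp only [mem_filter, mem_powerset, not_nonempty_iff_eq_empty, mem_singleton]
    exact ⟨fun h => h.2, by rintro rfl; simp⟩
  have hnonempty : (s.powerset.filter fun C : Finset V => G.IsClique (C : Set V)).filter
      Finset.Nonempty =
        s.powerset.filter fun C : Finset V => C.Nonempty ∧ G.IsClique (C : Set V) := by
    rw [filter_filter]
    exact filter_congr fun _ _ => and_comm
  have hsign :
      ∀ C ∈ s.powerset.filter (fun C : Finset V => C.Nonempty ∧ G.IsClique (C : Set V)),
      (-1 : ℤ) ^ #C = -(-1) ^ (#C - 1) := fun C hC => by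
    obtain ⟨n, hn⟩ := Nat.exists_eq_succ_of_ne_zero (card_pos.2 (mem_filter.1 hC).2.1).ne'
    rw [hn, pow_succ, Nat.succ_sub_one]
    ring
  rw [signedCliqueSum, ← sum_filter_add_sum_filter_not _ Finset.Nonempty, hempty, hnonempty,
    sum_singleton, sum_congr rfl hsign, sum_neg_distrib, cliqueEulerChar, card_empty, pow_zero]
  ring

theorem signedCliqueSum_insert (hv : v ∉ s) :
    G.signedCliqueSum (insert v s) =
      G.signedCliqueSum s - G.signedCliqueSum (s.filter (G.Adj v)) := by
  have hclique : ∀ C ⊆ s, G.IsClique (↑(insert v C) : Set V) ↔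
      C ⊆ s.filter (G.Adj v) ∧ G.IsClique (C : Set V) := by
    intro C hC
    rw [coe_insert, isClique_insert, and_comm]
    refine and_congr_left fun _ => ⟨fun h b hb => mem_filter.2 ⟨hC hb, h b hb ?_⟩,
      fun h b hb _ => (mem_filter.1 (h hb)).2⟩
    rintro rfl
    exact hv (hC hb)
  rw [signedCliqueSum, signedCliqueSum, signedCliqueSum, sum_filter, sum_filter, sum_filter,
    sum_powerset_insert hv, sub_eq_add_neg,
    ← sum_neg_distrib]
  congr 1
  rw [← sum_subset (powerset_mono.2 (filter_subset (G.Adj v) s))]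
  · refine sum_congr rfl fun C hC => ?_
    have hCN := mem_powerset.1 hC
    have hCs := hCN.trans (filter_subset _ _)
    rw [card_insert_of_notMem fun hvC => hv (hCs hvC), pow_succ]
    simp only [hclique C hCs, hCN, true_and]
    split_ifs <;> ring
  · intro C hC hCN
    rw [if_neg fun h => hCN (mem_powerset.2 ((hclique C (mem_powerset.1 hC)).1 h).1)]

theorem cliqueEulerChar_insert (hv : v ∉ s) :
    G.cliqueEulerChar (insert v s) + G.cliqueEulerChar (s.filter (G.Adj v)) =
      G.cliqueEulerChar s + 1 := by
  simp only [cliqueEulerChar_eq_one_sub_signedCliqueSum, signedCliqueSum_insert hv]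
  ring

theorem cliqueEulerChar_induce (s : Finset V) :
    (G.induce (s : Set V)).cliqueEulerChar univ = G.cliqueEulerChar s := by
  have hmap : ∀ {C : Finset V}, C ⊆ s →
      (C.subtype (· ∈ (s : Set V))).map (Function.Embedding.subtype _) = C :=
    fun hCs => subtype_map_of_mem fun _ hx => hCs hx
  refine sum_nbij (fun C => C.map (Function.Embedding.subtype _)) ?_
    (fun C _ D _ h => Finset.map_injective _ h) ?_ fun C _ => by simp
  · intro C hC
    simp only [mem_filter, mem_powerset] at hC ⊢
    obtain ⟨-, hne, hcl⟩ := hC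
    refine ⟨fun x hx => ?_, hne.map, ?_⟩
    · obtain ⟨y, -, rfl⟩ := mem_map.1 hx
      exact y.2
    · rwa [coe_map, Function.Embedding.coe_subtype, ← isClique_induce_iff]
  · intro C hC
    simp only [coe_filter, mem_powerset, subset_univ, true_and, Set.mem_ofPred_eq,
      Set.mem_image] at hC ⊢
    obtain ⟨hCs, ⟨x, hx⟩, hcl⟩ := hC
    refine ⟨C.subtype (· ∈ (s : Set V)), ⟨⟨⟨x, hCs hx⟩, mem_subtype.2 hx⟩, ?_⟩,
      hmap hCs⟩
    rwa [isClique_induce_iff, ← Function.Embedding.coe_subtype, ← coe_map, hmap hCs]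

end SimpleGraph

namespace IsChordal

open SimpleGraph

variable {V : Type*} {G : SimpleGraph V} {s : Finset V} {v x y : V}

theorem exists_adj_or_chord (hG : IsChordal G) {p : G.Walk x y} (hp : p.IsPath)
    (hlen : 2 ≤ p.length) (hvp : v ∉ p.support)
    (hvx : G.Adj v x) (hvy : G.Adj v y) :
    (∃ d ∈ p.support, d ≠ x ∧ d ≠ y ∧ G.Adj v d) ∨
      ∃ a ∈ p.support, ∃ b ∈ p.support, G.Adj a b ∧ s(a, b) ∉ p.edges := by
  have hxy : x ≠ y := by
    rintro rfl
    have := Walk.length_eq_zero_iff.2 (Walk.isPath_iff_nil.1 hp)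
    omega
  set c := Walk.cons hvx (p.concat hvy.symm)
  have hc : c.IsCycle := by
    refine (Walk.cons_isCycle_iff _ _).2 ⟨hp.concat hvp _, ?_⟩
    simp only [Walk.edges_concat, List.concat_eq_append, List.mem_append,
      List.mem_singleton, not_or]
    exact ⟨fun h => hvp (p.fst_mem_support_of_mem_edges h), by simp [hxy, hvy.ne]⟩
  obtain ⟨a, b, ha, hb, hab, hnot⟩ := hG c hc (by simp [c]; omega)
  have mem : ∀ z ∈ c.support, z = v ∨ z ∈ p.support := by
    intro z hz
    simp only [c, Walk.support_cons, Walk.support_concat,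
      List.mem_cons, List.mem_append, List.not_mem_nil] at hz
    tauto
  simp only [c, Walk.edges_cons, Walk.edges_concat, List.concat_eq_append,
    List.mem_cons, List.mem_append, List.not_mem_nil, not_or] at hnot
  obtain ⟨hvx', hpe, hyv', -⟩ := hnot
  -- A chord through `v` ends at a neighbour of `v` inside `p`; any other chord lies on `p`.
  rcases mem a ha with rfl | haP
  · rcases mem b hb with rfl | hbP
    · exact absurd rfl hab.ne
    · exact Or.inl ⟨b, hbP, by rintro rfl; exact hvx' rfl,
        by rintro rfl; exact hyv' Sym2.eq_swap, hab⟩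
  rcases mem b hb with rfl | hbP
  · exact Or.inl ⟨a, haP, by rintro rfl; exact hvx' Sym2.eq_swap,
      by rintro rfl; exact hyv' rfl, hab.symm⟩
  · exact Or.inr ⟨a, haP, b, hbP, hab, hpe⟩

theorem reachableIn_filter_adj (hG : IsChordal G) (hv : v ∉ s)
    (hx : x ∈ s.filter (G.Adj v)) (hy : y ∈ s.filter (G.Adj v)) (h : G.ReachableIn s x y) :
    G.ReachableIn (s.filter (G.Adj v)) x y := by
  obtain ⟨w, hw⟩ := h
  induction hn : w.length using Nat.strong_induction_on generalizing x y w with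
  | _ n ih =>
  by_cases hxy : x = y
  · subst hxy
    exact .refl hx
  by_cases hadj : G.Adj x y
  · exact .of_adj hx hy hadj
  set p := w.bypass
  have hps : ∀ z ∈ p.support, z ∈ s := fun z hz => hw z (w.support_bypass_subset_support hz)
  have hpn : p.length ≤ n := hn ▸ w.length_bypass_le_length
  have hlen : 2 ≤ p.length := by
    by_contra! h
    interval_cases hl : p.length
    · exact hxy (Walk.eq_of_length_eq_zero hl)
    · exact hadj (Walk.adj_of_length_eq_one hl)
  rcases hG.exists_adj_or_chord w.bypass_isPath hlen (fun h => hv (hps v h)) (mem_filter.1 hx).2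
      (mem_filter.1 hy).2 with ⟨d, hd, hdx, hdy, hvd⟩ | ⟨a, ha, b, hb, hab, hpe⟩
  · have hdN : d ∈ s.filter (G.Adj v) := mem_filter.2 ⟨hps d hd, hvd⟩
    have h₁ := p.length_takeUntil_lt_length hd hdy
    have h₂ := p.length_dropUntil_lt_length hd hdx
    exact (ih _ (by omega) hx hdN (p.takeUntil d hd)
      (fun z hz => hps z (p.support_takeUntil_subset_support hd hz)) rfl).trans
      (ih _ (by omega) hdN hy (p.dropUntil d hd)
        (fun z hz => hps z (p.support_dropUntil_subset_support hd hz)) rfl)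
  · obtain ⟨w', hw's, hw'l⟩ := p.exists_support_subset_length_lt_of_adj hab ha hb hpe
    exact ih _ (by omega) hx hy w' (fun z hz => hps z (hw's hz)) rfl

theorem card_image_componentIn_filter_adj (hG : IsChordal G) (hv : v ∉ s) :
    #((s.filter (G.Adj v)).image (G.componentIn s)) = G.numComponentsIn (s.filter (G.Adj v)) := by
  refine card_image_eq_card_image_of_iff fun x hx y hy => ?_
  rw [componentIn_eq_componentIn_iff (filter_subset _ _ hy), componentIn_eq_componentIn_iff hy]
  exact ⟨hG.reachableIn_filter_adj hv hx hy, .mono (filter_subset _ _)⟩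

theorem numComponentsIn_insert_add (hG : IsChordal G) (hv : v ∉ s) :
    G.numComponentsIn (insert v s) + G.numComponentsIn (s.filter (G.Adj v)) =
      G.numComponentsIn s + 1 := by
  rw [numComponentsIn_insert hv, numComponentsIn_eq_add hv,
    hG.card_image_componentIn_filter_adj hv]
  ring

theorem cliqueEulerChar_eq_numComponentsIn (hG : IsChordal G) (s : Finset V) :
    G.cliqueEulerChar s = G.numComponentsIn s := by
  induction s using Finset.strongInduction with
  | H s ih =>
  obtain rfl | ⟨v, hv⟩ := s.eq_empty_or_nonempty
  · simp [cliqueEulerChar, numComponentsIn, filter_singleton]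
  have hχ := cliqueEulerChar_insert (G := G) (notMem_erase v s)
  have hc := hG.numComponentsIn_insert_add (notMem_erase v s)
  rw [ih _ (erase_ssubset hv), ih _ ((filter_subset _ _).trans_ssubset (erase_ssubset hv)),
    insert_erase hv] at hχ
  rw [insert_erase hv] at hc
  omega

theorem cliqueEulerChar_univ [Fintype V] (hG : IsChordal G) :
    G.cliqueEulerChar univ = Nat.card G.ConnectedComponent := by
  rw [hG.cliqueEulerChar_eq_numComponentsIn, numComponentsIn_univ]

end IsChordal

theorem alternating_sum_cliques_chordal_disconnected_general
    (V : Type) [DecidableEq V] (G : SimpleGraph V)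
    (H : Finset V)
    (hchordal : IsChordal (G.induce (↑H : Set V)))
    (k : ℕ) (hk : k = Nat.card ((G.induce (↑H : Set V)).ConnectedComponent)) :
    (∑ C ∈ H.powerset.filter (fun C : Finset V => C.Nonempty ∧ G.IsClique (↑C : Set V)),
      (-1 : ℤ) ^ (C.card - 1) = (k : ℤ)) ∧
    (2 ≤ k →
      ∑ C ∈ H.powerset.filter (fun C : Finset V => C.Nonempty ∧ G.IsClique (↑C : Set V)),
        (-1 : ℤ) ^ (C.card - 1) ≠ 1) := by
  have hsum : G.cliqueEulerChar H = k := by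
    rw [← G.cliqueEulerChar_induce, hchordal.cliqueEulerChar_univ, hk]
  -- The statement decides cliqueness through `[DecidableEq V]`, `cliqueEulerChar` classically.
  rw [SimpleGraph.cliqueEulerChar] at hsum
  refine ⟨by convert hsum, fun hk2 h => ?_⟩
  have : (k : ℤ) = 1 := hsum.symm.trans (by convert h)
  omega

/-- If the subgraph induced by `H` is chordal but not connected (so each of its
connected components is decomposable), the alternating sum over nonempty
complete subsets of `H` equals the number `k` of connected components of the
induced subgraph; in particular it is not `1` when `k ≥ 2`. -/
theorem alternating_sum_cliques_chordal_disconnected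
    (V : Type) [Fintype V] [DecidableEq V] (G : SimpleGraph V)
    (H : Finset V) (hne : H.Nonempty)
    (hchordal : IsChordal (G.induce (↑H : Set V)))
    (hdisconn : ¬ (G.induce (↑H : Set V)).Connected)
    (k : ℕ) (hk : k = Nat.card ((G.induce (↑H : Set V)).ConnectedComponent)) :
    (∑ C ∈ H.powerset.filter (fun C : Finset V => C.Nonempty ∧ G.IsClique (↑C : Set V)),
      (-1 : ℤ) ^ (C.card - 1) = (k : ℤ)) ∧
    (2 ≤ k →
      ∑ C ∈ H.powerset.filter (fun C : Finset V => C.Nonempty ∧ G.IsClique (↑C : Set V)),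
        (-1 : ℤ) ^ (C.card - 1) ≠ 1) :=
  alternating_sum_cliques_chordal_disconnected_general V G H hchordal k hk
end

section
/- For binary data with decomposable generating class, the Markov factorization of cell probabilities implies the log-linear parameters decompose over prime components: if p(i) = ∏_{l=1}^k p^{C_l}(i_{C_l}) / ∏_{l=2}^k p^{S_l}(i_{S_l}) for all cells i, then for every E ⊆ V, θ_E(i_E) = Σ_{l=1}^k θ^{C_l}_E(i_{E∩C_l}) − Σ_{l=2}^k θ^{S_l}_E(i_{E∩S_l}), where θ^{C_l}_E and θ^{S_l}_E are the log-linear parameters computed from the marginal probability tables p^{C_l} and p^{S_l}, and θ^{C_l}_E = 0 whenever E ⊄ C_l (similarly for S_l). -/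
/-!
The parameter `θ_E` is the Möbius transform over the Boolean lattice of subsets of `E`
applied to `log q`, and this transform is linear. Taking logarithms turns the
factorization of `p` into a sum of clique terms minus separator terms, so `θ_E` splits
accordingly. A term `log p^{A}(i_{F ∩ A})` does not depend on the coordinates outside `A`,
and pairing `F` with `insert x F` for some `x ∈ E \ A` cancels its alternating sum.
-/

open Finset

namespace Finset

variable {α : Type*} [DecidableEq α] (R : Type*) [CommRing R]

def mobiusTransform (E : Finset α) : (Finset α → R) →ₗ[R] R where
  toFun g := ∑ F ∈ E.powerset, (-1 : R) ^ #(E \ F) * g F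
  map_add' g h := by simp only [Pi.add_apply, mul_add, sum_add_distrib]
  map_smul' c g := by simp only [Pi.smul_apply, smul_eq_mul, RingHom.id_apply, mul_sum,
    mul_left_comm]

variable {R}

theorem mobiusTransform_apply (E : Finset α) (g : Finset α → R) :
    mobiusTransform R E g = ∑ F ∈ E.powerset, (-1 : R) ^ #(E \ F) * g F :=
  rfl

theorem mobiusTransform_insert_eq_zero {x : α} {E : Finset α} (hx : x ∉ E)
    {g : Finset α → R} (hg : ∀ F ⊆ E, g (insert x F) = g F) :
    mobiusTransform R (insert x E) g = 0 := by
  rw [mobiusTransform_apply, sum_powerset_insert hx, ← sum_add_distrib]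
  refine sum_eq_zero fun F hF => ?_
  have hFE : F ⊆ E := mem_powerset.mp hF
  have hxF : x ∉ F := fun h => hx (hFE h)
  rw [insert_sdiff_insert, sdiff_insert_of_notMem hx, insert_sdiff_of_notMem _ hxF,
    card_insert_of_notMem fun h => hx (mem_sdiff.mp h).1, hg F hFE, pow_succ]
  ring

theorem mobiusTransform_inter_eq_zero_of_not_subset {E A : Finset α} (hEA : ¬E ⊆ A)
    (g : Finset α → R) : mobiusTransform R E (fun F => g (F ∩ A)) = 0 := by
  obtain ⟨x, hxE, hxA⟩ := not_subset.mp hEA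
  rw [← insert_erase hxE]
  exact mobiusTransform_insert_eq_zero (notMem_erase x E) fun F _ => by
    rw [insert_inter_of_notMem hxA]

end Finset

theorem theta_decomposition_over_prime_components_general
    (V : Type) [DecidableEq V] (k : ℕ)
    (C : Fin (k + 1) → Finset V) (S : Fin (k + 1) → Finset V)
    (p : Finset V → ℝ) (pC : Fin (k + 1) → Finset V → ℝ)
    (pS : Fin (k + 1) → Finset V → ℝ)
    (hpC : ∀ l E, 0 < pC l E) (hpS : ∀ l E, 0 < pS l E)
    (hfact : ∀ E : Finset V,
      p E = (∏ l, pC l (E ∩ C l)) /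
        ∏ l ∈ (Finset.univ : Finset (Fin (k + 1))).erase 0, pS l (E ∩ S l))
    (θfun : (Finset V → ℝ) → Finset V → ℝ)
    (hθfun : ∀ (q : Finset V → ℝ) (F : Finset V),
      θfun q F = ∑ E ∈ F.powerset, (-1 : ℝ) ^ ((F \ E).card) * Real.log (q E)) :
    ∀ E : Finset V,
      (θfun p E =
        (∑ l, θfun (fun A => pC l (A ∩ C l)) E) -
          ∑ l ∈ (Finset.univ : Finset (Fin (k + 1))).erase 0,
            θfun (fun A => pS l (A ∩ S l)) E) ∧
      (∀ l, ¬ E ⊆ C l → θfun (fun A => pC l (A ∩ C l)) E = 0) ∧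
      (∀ l ∈ (Finset.univ : Finset (Fin (k + 1))).erase 0,
        ¬ E ⊆ S l → θfun (fun A => pS l (A ∩ S l)) E = 0) := by
  intro E
  have hθ (q : Finset V → ℝ) : θfun q E = mobiusTransform ℝ E (fun F => Real.log (q F)) :=
    hθfun q E
  have hlog : (fun F => Real.log (p F)) =
      ∑ l, (fun F => Real.log (pC l (F ∩ C l))) -
        ∑ l ∈ univ.erase 0, fun F => Real.log (pS l (F ∩ S l)) := by
    funext F
    rw [Pi.sub_apply, Finset.sum_apply, Finset.sum_apply, hfact,
      Real.log_div (prod_pos fun l _ => hpC l _).ne' (prod_pos fun l _ => hpS l _).ne',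
      Real.log_prod fun l _ => (hpC l _).ne', Real.log_prod fun l _ => (hpS l _).ne']
  refine ⟨?_, fun l hl => ?_, fun l _ hl => ?_⟩
  · simp only [hθ, hlog, map_sub, map_sum]
  · rw [hθ]
    exact mobiusTransform_inter_eq_zero_of_not_subset hl fun A => Real.log (pC l A)
  · rw [hθ]
    exact mobiusTransform_inter_eq_zero_of_not_subset hl fun A => Real.log (pS l A)

/-- For binary data, if the cell probabilities factorize over cliques
`C_1,…,C_k` and separators `S_2,…,S_k` of a decomposable graph, then the
log-linear parameters decompose as
`θ_E = ∑_l θ^{C_l}_E − ∑_{l≥2} θ^{S_l}_E`, where `θ^{A}_E` is computed from the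
`A`-marginal table, and `θ^{C_l}_E = 0` whenever `E ⊄ C_l` (similarly for
`S_l`). -/
theorem theta_decomposition_over_prime_components
    (V : Type) [Fintype V] [DecidableEq V] (k : ℕ)
    (C : Fin (k + 1) → Finset V) (S : Fin (k + 1) → Finset V)
    (p : Finset V → ℝ) (pC : Fin (k + 1) → Finset V → ℝ)
    (pS : Fin (k + 1) → Finset V → ℝ)
    (hp : ∀ E, 0 < p E) (hpC : ∀ l E, 0 < pC l E) (hpS : ∀ l E, 0 < pS l E)
    (hfact : ∀ E : Finset V,
      p E = (∏ l, pC l (E ∩ C l)) /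
        ∏ l ∈ (Finset.univ : Finset (Fin (k + 1))).erase 0, pS l (E ∩ S l))
    (θfun : (Finset V → ℝ) → Finset V → ℝ)
    (hθfun : ∀ (q : Finset V → ℝ) (F : Finset V),
      θfun q F = ∑ E ∈ F.powerset, (-1 : ℝ) ^ ((F \ E).card) * Real.log (q E)) :
    ∀ E : Finset V,
      (θfun p E =
        (∑ l, θfun (fun A => pC l (A ∩ C l)) E) -
          ∑ l ∈ (Finset.univ : Finset (Fin (k + 1))).erase 0,
            θfun (fun A => pS l (A ∩ S l)) E) ∧
      (∀ l, ¬ E ⊆ C l → θfun (fun A => pC l (A ∩ C l)) E = 0) ∧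
      (∀ l ∈ (Finset.univ : Finset (Fin (k + 1))).erase 0,
        ¬ E ⊆ S l → θfun (fun A => pS l (A ∩ S l)) E = 0) :=
  theta_decomposition_over_prime_components_general V k C S p pC pS hpC hpS hfact θfun hθfun
end

section
/- (Hammersley–Clifford for binary log-linear models) Let p_E > 0, E ⊆ V, be a probability vector on the binary table, and θ_F = Σ_{E⊆F} (-1)^{|F\E|} log p_E. The distribution is Markov with respect to an undirected graph G on V if and only if θ_E = 0 for every E ⊆ V that is not a complete subset of G. -/
/-!
Write `θ` for the Möbius transform of `log p` over the Boolean lattice of subsets of `V`, so that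
`log p E = ∑_{F ⊆ E} θ F`. If `p` factorizes over the cliques, `log p` is a sum of functions of
`E ∩ D` with `D` a clique, and the Möbius transform of such a function vanishes at every `E ⊄ D`:
pairing `A` with `insert w A` for some `w ∈ E \ D` cancels the alternating sum. A non-complete set
lies in no clique, so `θ` vanishes there. Conversely, if `θ` is supported on the cliques, then
`p E = ∏_{D ⊆ E clique} exp (θ D)` is a factorization with `ψ D A = exp (θ D)` if `A = D` and `1`
otherwise.
-/

open Finset

section Moebius

variable {α R : Type*} [DecidableEq α] [CommRing R]

def moebiusTransform (f : Finset α → R) (F : Finset α) : R :=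
  ∑ E ∈ F.powerset, (-1 : R) ^ (F \ E).card * f E

theorem sum_Icc_neg_one_pow_card_sdiff {A E : Finset α} (hAE : A ⊆ E) :
    ∑ F ∈ Icc A E, (-1 : R) ^ (F \ A).card = if A = E then 1 else 0 := by
  have hinj : Set.InjOn (A ∪ ·) ((E \ A).powerset : Set (Finset α)) := fun B hB C hC hBC => by
    simp only [coe_powerset, Set.mem_preimage, Set.mem_powerset_iff, coe_subset] at hB hC
    rw [← union_sdiff_cancel_left (disjoint_sdiff.mono_right hB),
      ← union_sdiff_cancel_left (disjoint_sdiff.mono_right hC)]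
    exact congrArg (· \ A) hBC
  rw [Icc_eq_image_powerset hAE, sum_image hinj]
  have hsign : ∀ B ∈ (E \ A).powerset, (-1 : R) ^ ((A ∪ B) \ A).card = (-1 : R) ^ B.card :=
    fun B hB => by
      rw [union_sdiff_cancel_left (disjoint_sdiff.mono_right (mem_powerset.1 hB))]
  rw [sum_congr rfl hsign]
  have := congrArg (Int.cast : ℤ → R) (sum_powerset_neg_one_pow_card (x := E \ A))
  push_cast at this
  rw [this]
  exact if_congr (sdiff_eq_empty_iff_subset.trans ⟨subset_antisymm hAE, fun h => h ▸ Subset.rfl⟩)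
    rfl rfl

theorem sum_powerset_moebiusTransform (f : Finset α → R) (E : Finset α) :
    ∑ F ∈ E.powerset, moebiusTransform f F = f E := by
  unfold moebiusTransform
  calc ∑ F ∈ E.powerset, ∑ A ∈ F.powerset, (-1 : R) ^ (F \ A).card * f A
      = ∑ A ∈ E.powerset, ∑ F ∈ Icc A E, (-1 : R) ^ (F \ A).card * f A := by
        refine sum_comm' fun F A => ?_
        simp only [mem_powerset, mem_Icc]
        exact ⟨fun ⟨hFE, hAF⟩ => ⟨⟨hAF, hFE⟩, hAF.trans hFE⟩, fun ⟨h, _⟩ => ⟨h.2, h.1⟩⟩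
    _ = ∑ A ∈ E.powerset, if A = E then f A else 0 := by
        refine sum_congr rfl fun A hA => ?_
        rw [← sum_mul, sum_Icc_neg_one_pow_card_sdiff (mem_powerset.1 hA), ite_mul, one_mul,
          zero_mul]
    _ = f E := by rw [sum_ite_eq' E.powerset E f, if_pos (mem_powerset_self E)]

theorem moebiusTransform_sum {ι : Type*} (S : Finset ι) (g : ι → Finset α → R) (F : Finset α) :
    moebiusTransform (fun A => ∑ i ∈ S, g i A) F = ∑ i ∈ S, moebiusTransform (g i) F := by
  simp only [moebiusTransform, mul_sum]
  exact sum_comm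

theorem moebiusTransform_eq_zero_of_insert_invariant {f : Finset α → R} {E : Finset α} {w : α}
    (hw : w ∈ E) (hf : ∀ A, f (insert w A) = f A) : moebiusTransform f E = 0 := by
  obtain ⟨s, hws, rfl⟩ : ∃ s, w ∉ s ∧ insert w s = E :=
    ⟨E.erase w, notMem_erase w E, insert_erase hw⟩
  rw [moebiusTransform, sum_powerset_insert hws, ← sum_add_distrib]
  refine sum_eq_zero fun A hA => ?_
  have hwA : w ∉ A := fun h => hws (mem_powerset.1 hA h)
  have hwsA : w ∉ s \ A := fun h => hws (mem_sdiff.1 h).1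
  rw [insert_sdiff_of_notMem s hwA, insert_sdiff_insert, sdiff_insert_of_notMem hws,
    card_insert_of_notMem hwsA, hf, pow_succ]
  ring

end Moebius

section LogLinear

variable {α : Type*} [DecidableEq α]

theorem moebiusTransform_log_eq_zero_of_factorization {S : Finset (Finset α)}
    {p : Finset α → ℝ} {ψ : Finset α → Finset α → ℝ} (hψ : ∀ D ∈ S, ∀ A, ψ D A ≠ 0)
    (hp : ∀ E, p E = ∏ D ∈ S, ψ D (E ∩ D)) {E : Finset α} (hE : ∀ D ∈ S, ¬E ⊆ D) :
    moebiusTransform (fun A => Real.log (p A)) E = 0 := by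
  have hlog : (fun A => Real.log (p A)) = fun A => ∑ D ∈ S, Real.log (ψ D (A ∩ D)) :=
    funext fun A => by rw [hp, Real.log_prod fun D hD => hψ D hD _]
  rw [hlog, moebiusTransform_sum]
  refine sum_eq_zero fun D hD => ?_
  obtain ⟨w, hwE, hwD⟩ := not_subset.1 (hE D hD)
  exact moebiusTransform_eq_zero_of_insert_invariant hwE fun A => by
    rw [insert_inter_of_notMem hwD]

theorem eq_prod_exp_moebiusTransform_log {S : Finset (Finset α)} {p : Finset α → ℝ}
    (hS : ∀ D ∉ S, moebiusTransform (fun A => Real.log (p A)) D = 0) {E : Finset α}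
    (hpE : 0 < p E) :
    p E = ∏ D ∈ S,
      if E ∩ D = D then Real.exp (moebiusTransform (fun A => Real.log (p A)) D) else 1 := by
  set θ := moebiusTransform fun A => Real.log (p A)
  have hsupp : ∑ D ∈ S with D ⊆ E, θ D = ∑ D ∈ E.powerset, θ D :=
    sum_subset (fun D hD => mem_powerset.2 (mem_filter.1 hD).2) fun D hDE hD =>
      hS D fun hDS => hD (mem_filter.2 ⟨hDS, mem_powerset.1 hDE⟩)
  simp_rw [inter_eq_right]
  rw [← prod_filter, ← Real.exp_sum, hsupp, sum_powerset_moebiusTransform, Real.exp_log hpE]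

end LogLinear

open scoped Classical

theorem hammersley_clifford_binary_general
    (V : Type) [Fintype V] [DecidableEq V] (G : SimpleGraph V)
    (p : Finset V → ℝ) (hp : ∀ E, 0 < p E)
    (θ : Finset V → ℝ)
    (hθ : ∀ F : Finset V,
      θ F = ∑ E ∈ F.powerset, (-1 : ℝ) ^ ((F \ E).card) * Real.log (p E)) :
    (∃ ψ : Finset V → Finset V → ℝ, (∀ D A, 0 < ψ D A) ∧
        ∀ E : Finset V,
          p E = ∏ D ∈ (Finset.univ : Finset V).powerset.filter
              (fun D : Finset V => G.IsClique (↑D : Set V)), ψ D (E ∩ D)) ↔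
    (∀ E : Finset V, ¬ G.IsClique (↑E : Set V) → θ E = 0) := by
  have hθ' : θ = moebiusTransform fun E => Real.log (p E) := funext hθ
  have hmem : ∀ D : Finset V,
      D ∈ (univ : Finset V).powerset.filter (fun D : Finset V => G.IsClique (D : Set V)) ↔
        G.IsClique (D : Set V) := by simp
  constructor
  · rintro ⟨ψ, hψ, hfac⟩ E hE
    rw [hθ']
    refine moebiusTransform_log_eq_zero_of_factorization (fun D _ A => (hψ D A).ne') hfac ?_
    exact fun D hD hED => hE (((hmem D).1 hD).subset (coe_subset.2 hED))
  · intro hθ0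
    refine ⟨fun D A => if A = D then Real.exp (θ D) else 1, fun D A => ?_, fun E => ?_⟩
    · dsimp only
      split_ifs <;> positivity
    · rw [hθ']
      exact eq_prod_exp_moebiusTransform_log (fun D hD => hθ' ▸ hθ0 D (mt (hmem D).2 hD)) (hp E)

/-- Hammersley–Clifford for binary log-linear models: a positive binary
distribution factorizes over the cliques of `G` (is Markov with respect to `G`)
iff the log-linear parameters `θ_E` vanish for every `E` which is not complete
in `G`. -/
theorem hammersley_clifford_binary
    (V : Type) [Fintype V] [DecidableEq V] (G : SimpleGraph V)
    (p : Finset V → ℝ) (hp : ∀ E, 0 < p E)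
    (hsum : ∑ E ∈ (Finset.univ : Finset V).powerset, p E = 1)
    (θ : Finset V → ℝ)
    (hθ : ∀ F : Finset V,
      θ F = ∑ E ∈ F.powerset, (-1 : ℝ) ^ ((F \ E).card) * Real.log (p E)) :
    (∃ ψ : Finset V → Finset V → ℝ, (∀ D A, 0 < ψ D A) ∧
        ∀ E : Finset V,
          p E = ∏ D ∈ (Finset.univ : Finset V).powerset.filter
              (fun D : Finset V => G.IsClique (↑D : Set V)), ψ D (E ∩ D)) ↔
    (∀ E : Finset V, ¬ G.IsClique (↑E : Set V) → θ E = 0) :=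
  hammersley_clifford_binary_general V G p hp θ hθ
end
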